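/- arXiv:1403.5135 — 5 statements merged into one kernel-verified Lean document; each statement's English description precedes it below -/
import Mathlib

section
/- Suppose functions Δ(k) (for 1 ≤ k < n) and given data g(k) satisfy the recursion (n−k)·Δ(k) = (n−1)! − n!·g(k) + Σ_{l=1}^{k−1} Δ(l), where g : {1,...,n} → ℚ. Then for all 1 ≤ k < n, Δ(k) = (n!/((n−k)(n−k+1)))·(1 − g(k)·(n−k+1) − Σ_{l=1}^{k−1} g(l)). -/
/-!
Subtracting the recursion at `k` from the one at `k + 1` eliminates the partial sums of `Δ`
and leaves the first-order recurrence `(n - k - 1) Δ(k+1) = (n - k + 1) Δ(k) - n c (g(k+1) - g(k))`,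
where `n! = n c` with `c = (n-1)!`. Multiplied through by `(n - k)(n - k + 1)`, the closed form is
then checked by induction on `k`, starting from the recursion at `k = 1`.
-/

open Finset

theorem Finset.sum_Icc_one_add_one_sub_one {M : Type*} [AddCommMonoid M] (f : ℕ → M) {k : ℕ}
    (hk : 1 ≤ k) : ∑ l ∈ Icc 1 (k + 1 - 1), f l = ∑ l ∈ Icc 1 (k - 1), f l + f k := by
  obtain ⟨j, rfl⟩ : ∃ j, k = j + 1 := ⟨k - 1, by omega⟩
  simp only [Nat.add_sub_cancel]
  exact sum_Icc_succ_top (by omega) f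

section ExitRecursion

variable {K : Type*} {n : ℕ} {c : K} {Δ g : ℕ → K}

theorem exitRecursion_succ [CommRing K]
    (hrec : ∀ k, 1 ≤ k → k < n →
      ((n : K) - k) * Δ k = c - n * c * g k + ∑ l ∈ Icc 1 (k - 1), Δ l)
    {k : ℕ} (hk : 1 ≤ k) (hkn : k + 1 < n) :
    ((n : K) - (k + 1)) * Δ (k + 1) = ((n : K) - k + 1) * Δ k - n * c * (g (k + 1) - g k) := by
  have hnext := hrec (k + 1) (by omega) hkn
  rw [sum_Icc_one_add_one_sub_one _ hk] at hnext
  push_cast at hnext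
  linear_combination hnext - hrec k hk (by omega)

theorem exitRecursion_mul_eq [CommRing K]
    (hrec : ∀ k, 1 ≤ k → k < n →
      ((n : K) - k) * Δ k = c - n * c * g k + ∑ l ∈ Icc 1 (k - 1), Δ l)
    {k : ℕ} (hk : 1 ≤ k) (hkn : k < n) :
    ((n : K) - k) * ((n : K) - k + 1) * Δ k =
      n * c * (1 - g k * ((n : K) - k + 1) - ∑ l ∈ Icc 1 (k - 1), g l) := by
  induction k, hk using Nat.le_induction with
  | base =>
    have hfirst := hrec 1 le_rfl hkn
    simp only [Nat.sub_self, Icc_eq_empty_of_lt zero_lt_one, sum_empty, Nat.cast_one] at hfirst ⊢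
    linear_combination (n : K) * hfirst
  | succ k hk ih =>
    rw [sum_Icc_one_add_one_sub_one _ hk]
    push_cast
    linear_combination ((n : K) - k) * exitRecursion_succ hrec hk hkn + ih (by omega)

theorem exitRecursion_eq [Field K] [CharZero K]
    (hrec : ∀ k, 1 ≤ k → k < n →
      ((n : K) - k) * Δ k = c - n * c * g k + ∑ l ∈ Icc 1 (k - 1), Δ l)
    {k : ℕ} (hk : 1 ≤ k) (hkn : k < n) :
    Δ k = n * c / (((n : K) - k) * ((n : K) - k + 1)) *
      (1 - g k * ((n : K) - k + 1) - ∑ l ∈ Icc 1 (k - 1), g l) := by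
  have hsub : ((n : K) - k) ≠ 0 := sub_ne_zero.mpr (by exact_mod_cast hkn.ne')
  have hsucc : ((n : K) - k + 1) ≠ 0 := by
    rw [← Nat.cast_sub hkn.le]
    exact Nat.cast_add_one_ne_zero _
  rw [div_mul_eq_mul_div, eq_div_iff (mul_ne_zero hsub hsucc), mul_comm]
  exact exitRecursion_mul_eq hrec hk hkn

end ExitRecursion

theorem stmt5_general (n : ℕ) (Δ g : ℕ → ℚ)
    (hrec : ∀ k, 1 ≤ k → k < n →
      ((n : ℚ) - k) * Δ k =
        (Nat.factorial (n - 1) : ℚ) - (Nat.factorial n : ℚ) * g k +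
          ∑ l ∈ Finset.Icc 1 (k - 1), Δ l) :
    ∀ k, 1 ≤ k → k < n →
      Δ k = (Nat.factorial n : ℚ) / (((n : ℚ) - k) * ((n : ℚ) - k + 1)) *
        (1 - g k * ((n : ℚ) - k + 1) - ∑ l ∈ Finset.Icc 1 (k - 1), g l) := by
  intro k hk hkn
  have hfact : (Nat.factorial n : ℚ) = n * Nat.factorial (n - 1) := by
    exact_mod_cast (Nat.mul_factorial_pred (by omega : n ≠ 0)).symm
  rw [hfact] at hrec ⊢
  exact exitRecursion_eq hrec hk hkn

/-- Solving the signed-exit-number recursion: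
if (n−k)·Δ(k) = (n−1)! − n!·g(k) + Σ_{l=1}^{k−1} Δ(l) for 1 ≤ k < n, then
Δ(k) = n!/((n−k)(n−k+1))·(1 − g(k)(n−k+1) − Σ_{l=1}^{k−1} g(l)). -/
theorem stmt5 (n : ℕ) (hn : 2 ≤ n) (Δ g : ℕ → ℚ)
    (hrec : ∀ k, 1 ≤ k → k < n →
      ((n : ℚ) - k) * Δ k =
        (Nat.factorial (n - 1) : ℚ) - (Nat.factorial n : ℚ) * g k +
          ∑ l ∈ Finset.Icc 1 (k - 1), Δ l) :
    ∀ k, 1 ≤ k → k < n →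
      Δ k = (Nat.factorial n : ℚ) / (((n : ℚ) - k) * ((n : ℚ) - k + 1)) *
        (1 - g k * ((n : ℚ) - k + 1) - ∑ l ∈ Finset.Icc 1 (k - 1), g l) :=
  stmt5_general n Δ g hrec
end

section
/- For the case k = n, the drop function formula d_λ(n,x) = (Π_{y∈λ} h(y))·f_λ(n,x) holds; in particular summing over all cells x in which n can appear recovers n! = (Π_{y∈λ} h(y))·f_λ. -/
/-!
Pad `μ` to `M ≥ μ.colLen 0` rows and put `βᵢ = λᵢ + M - 1 - i`. The hook lengths of row `i`
together with the differences `βᵢ - βₖ` (`i < k < M`) are exactly `1, …, βᵢ`, so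
`∏ h(y) · Δ(β) = ∏ βᵢ!` with `Δ` the Vandermonde product. It remains to show
`f_μ · ∏ βᵢ! = n! · Δ(β)`, by induction on `n`: the entry `n` of a standard tableau sits in a
corner, removing the corner of row `r` lowers `βᵣ` by one, and the induction step becomes the
identity `∑ᵣ βᵣ Δ(β - eᵣ) = (∑ᵣ βᵣ - C(M,2)) Δ(β)`. Dividing by `Δ(β)`, its left side is the
coefficient of `X^(M-1)` of a polynomial of degree `< M`, computed by Lagrange interpolation.

The first claim is the case `k = n` of the drop-function formula, where the sum has one term.
-/

open Finset

namespace NPS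

def armZ (μ : YoungDiagram) (x : ℕ × ℕ) : ℤ := (μ.rowLen x.1 : ℤ) - x.2 - 1
def legZ (μ : YoungDiagram) (x : ℕ × ℕ) : ℤ := (μ.colLen x.2 : ℤ) - x.1 - 1
def hook (μ : YoungDiagram) (x : ℕ × ℕ) : ℕ := μ.rowLen x.1 + μ.colLen x.2 - x.1 - x.2 - 1

/-- A standard Young tableau of shape `μ`, as a function `ℕ × ℕ → ℕ` that is a bijection
from the cells of `μ` onto `{1, …, n}`, is `0` outside `μ`, and strictly increases
along rows and columns. -/
def IsSYT (μ : YoungDiagram) (T : ℕ × ℕ → ℕ) : Prop :=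
  Set.BijOn T ↑μ.cells (Set.Icc 1 μ.card) ∧
  (∀ x ∉ μ.cells, T x = 0) ∧
  (∀ i j : ℕ, (i, j + 1) ∈ μ → T (i, j) < T (i, j + 1)) ∧
  (∀ i j : ℕ, (i + 1, j) ∈ μ → T (i, j) < T (i + 1, j))

/-- The number of standard Young tableaux of shape `μ` with entry `k` in cell `x`. -/
noncomputable def fc (μ : YoungDiagram) (x : ℕ × ℕ) (k : ℕ) : ℕ :=
  Nat.card {T : ℕ × ℕ → ℕ // IsSYT μ T ∧ T x = k}

/-- The number of standard Young tableaux of shape `μ`. -/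
noncomputable def fS (μ : YoungDiagram) : ℕ := Nat.card {T : ℕ × ℕ → ℕ // IsSYT μ T}

section Vandermonde

variable {R : Type*} [CommRing R]

def vandermondeProd (M : ℕ) (v : ℕ → R) : R := ∏ j ∈ range M, ∏ i ∈ range j, (v i - v j)

theorem vandermondeProd_succ (M : ℕ) (v : ℕ → R) :
    vandermondeProd (M + 1) v = vandermondeProd M v * ∏ i ∈ range M, (v i - v M) :=
  prod_range_succ _ _

theorem vandermondeProd_congr {M : ℕ} {v w : ℕ → R} (h : ∀ i < M, v i = w i) :
    vandermondeProd M v = vandermondeProd M w :=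
  prod_congr rfl fun j hj => prod_congr rfl fun i hi => by
    rw [mem_range] at hi hj
    rw [h i (hi.trans hj), h j hj]

/-- `vandermondeProd M (update v r a)` is a multiple, independent of `a`,
of `∏ j ≠ r, (a - v j)`. -/
theorem vandermondeProd_update_mul_prod_erase {M r : ℕ} (hr : r < M) (v : ℕ → R) (a b : R) :
    vandermondeProd M (Function.update v r a) * ∏ j ∈ (range M).erase r, (b - v j) =
      vandermondeProd M (Function.update v r b) * ∏ j ∈ (range M).erase r, (a - v j) := by
  induction M with
  | zero => omega
  | succ M ih =>
    rcases Nat.lt_succ_iff_lt_or_eq.mp hr with hr | hrM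
    · have hMr : M ≠ r := hr.ne'
      have hlast : ∀ c, ∏ i ∈ range M, (Function.update v r c i - Function.update v r c M) =
          (c - v M) * ∏ i ∈ (range M).erase r, (v i - v M) := fun c => by
        rw [← mul_prod_erase _ _ (mem_range.mpr hr), Function.update_self,
          Function.update_of_ne hMr]
        exact congrArg _ (prod_congr rfl fun i hi => by
          rw [Function.update_of_ne (ne_of_mem_erase hi)])
      have herase : (range (M + 1)).erase r = insert M ((range M).erase r) := by
        rw [range_add_one, erase_insert_of_ne hMr]
      have hM : M ∉ (range M).erase r := fun h => by simpa using mem_of_mem_erase h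
      rw [vandermondeProd_succ, vandermondeProd_succ, hlast, hlast, herase, prod_insert hM,
        prod_insert hM]
      linear_combination (b - v M) * (a - v M) * (∏ i ∈ (range M).erase r, (v i - v M)) * ih hr
    · subst r
      have hupd : ∀ c, vandermondeProd M (Function.update v M c) = vandermondeProd M v :=
        fun c => vandermondeProd_congr fun i hi => Function.update_of_ne hi.ne _ _
      have hlast : ∀ c, ∏ i ∈ range M, (Function.update v M c i - Function.update v M c M) =
          ∏ i ∈ range M, (v i - c) := fun c =>
        prod_congr rfl fun i hi => by
          rw [Function.update_self, Function.update_of_ne (mem_range.mp hi).ne]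
      rw [vandermondeProd_succ, vandermondeProd_succ, hupd, hupd, hlast, hlast,
        range_add_one, erase_insert notMem_range_self, mul_assoc, mul_assoc,
        ← prod_mul_distrib, ← prod_mul_distrib]
      exact congrArg _ (prod_congr rfl fun _ _ => by ring)

theorem vandermondeProd_eq_prod_Ico (M : ℕ) (v : ℕ → R) :
    vandermondeProd M v = ∏ i ∈ range M, ∏ k ∈ Ico (i + 1) M, (v i - v k) :=
  prod_comm' fun k i => by simp only [mem_range, mem_Ico]; omega

theorem vandermondeProd_eq_zero {M i k : ℕ} {v : ℕ → R} (hik : i < k) (hk : k < M)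
    (h : v i = v k) : vandermondeProd M v = 0 :=
  prod_eq_zero (mem_range.mpr hk) (prod_eq_zero (mem_range.mpr hik) (sub_eq_zero.mpr h))

theorem vandermondeProd_pos [PartialOrder R] [IsStrictOrderedRing R] {M : ℕ} {v : ℕ → R}
    (hv : ∀ i k, i < k → k < M → v k < v i) : 0 < vandermondeProd M v :=
  prod_pos fun k hk => prod_pos fun i hi =>
    sub_pos.mpr (hv i k (mem_range.mp hi) (mem_range.mp hk))

end Vandermonde

section LagrangeIdentity

open Polynomial

variable {F : Type*} [Field F] {ι : Type*} [DecidableEq ι]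

/-- Its values at the nodes are `-(v i * ∏ j ≠ i, (v i - v j - 1))` and its degree is `< #s`,
so Lagrange interpolation turns its coefficient of `X ^ (#s - 1)` into the sum of
`sum_mul_prod_erase_sub_one_div`. -/
noncomputable def shiftPoly (s : Finset ι) (v : ι → F) : F[X] :=
  X * ∏ j ∈ s, (X - C (v j + 1)) - (X - C (#s : F)) * ∏ j ∈ s, (X - C (v j))

theorem shiftPoly_insert {s : Finset ι} {a : ι} (ha : a ∉ s) (v : ι → F) :
    shiftPoly (insert a s) v =
      shiftPoly s v * (X - C (v a + 1)) + C ((#s : F) - v a) * ∏ j ∈ s, (X - C (v j)) := by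
  simp only [shiftPoly, prod_insert ha, card_insert_of_notMem ha, Nat.cast_succ, C_add, C_sub,
    C_1]
  ring

theorem coeff_shiftPoly_of_card_le (s : Finset ι) (v : ι → F) {k : ℕ} (hk : #s ≤ k) :
    (shiftPoly s v).coeff k = 0 := by
  induction s using Finset.induction_on generalizing k with
  | empty => simp [shiftPoly]
  | insert a s ha ih =>
    rw [card_insert_of_notMem ha] at hk
    obtain ⟨k, rfl⟩ : ∃ m, k = m + 1 := ⟨k - 1, by omega⟩
    have hP : (∏ j ∈ s, (X - C (v j))).natDegree < k + 1 := by
      rw [natDegree_finsetProd_X_sub_C_eq_card]; omega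
    rw [shiftPoly_insert ha, coeff_add, coeff_mul_X_sub_C, coeff_C_mul,
      coeff_eq_zero_of_natDegree_lt hP, ih (by omega), ih (by omega)]
    ring

theorem coeff_shiftPoly_card_sub_one (s : Finset ι) (v : ι → F) :
    (shiftPoly s v).coeff (#s - 1) = ((#s).choose 2 : F) - ∑ j ∈ s, v j := by
  induction s using Finset.induction_on with
  | empty => simp [shiftPoly]
  | insert a s ha ih =>
    have hP : (∏ j ∈ s, (X - C (v j))).coeff #s = 1 := by
      simpa using (monic_prod_of_monic s _ fun j _ => monic_X_sub_C (v j)).coeff_natDegree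
    rw [shiftPoly_insert ha, card_insert_of_notMem ha, Nat.add_sub_cancel, coeff_add, coeff_C_mul,
      hP, sum_insert ha, Nat.choose_succ_succ', Nat.choose_one_right]
    rcases Nat.eq_zero_or_pos #s with hs | hs
    · obtain rfl := card_eq_zero.mp hs
      simp [shiftPoly]
    · obtain ⟨m, hm⟩ : ∃ m, #s = m + 1 := ⟨#s - 1, by omega⟩
      have ih' : (shiftPoly s v).coeff m = ((#s).choose 2 : F) - ∑ j ∈ s, v j := by
        rw [← ih, hm, Nat.add_sub_cancel]
      rw [hm, coeff_mul_X_sub_C, ← hm, ih', coeff_shiftPoly_of_card_le s v le_rfl]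
      push_cast
      ring

theorem sum_mul_prod_erase_sub_one_div {s : Finset ι} {v : ι → F} (hv : Set.InjOn v s) :
    ∑ i ∈ s, v i * ∏ j ∈ s.erase i, (v i - v j - 1) / (v i - v j) =
      ∑ i ∈ s, v i - ((#s).choose 2 : F) := by
  have hdeg : (shiftPoly s v).degree < #s :=
    degree_lt_iff_coeff_zero _ _ |>.mpr fun k hk =>
      coeff_shiftPoly_of_card_le s v (by exact_mod_cast hk)
  have heval : ∀ i ∈ s, (shiftPoly s v).eval (v i) = -(v i * ∏ j ∈ s.erase i, (v i - v j - 1)) := by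
    intro i hi
    have hzero : ∏ j ∈ s, (v i - v j) = 0 := prod_eq_zero hi (sub_self _)
    simp only [shiftPoly, eval_sub, eval_mul, eval_X, eval_C, eval_prod, hzero,
      ← mul_prod_erase s (fun j => v i - (v j + 1)) hi]
    ring_nf
  rw [← neg_sub, ← coeff_shiftPoly_card_sub_one, Lagrange.coeff_eq_sum hv hdeg,
    ← sum_neg_distrib]
  refine sum_congr rfl fun i hi => ?_
  rw [heval i hi, prod_div_distrib]
  ring

theorem sum_mul_vandermondeProd_update (M : ℕ) {v : ℕ → F} (hv : Set.InjOn v (range M)) :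
    ∑ r ∈ range M, v r * vandermondeProd M (Function.update v r (v r - 1)) =
      (∑ r ∈ range M, v r - (M.choose 2 : F)) * vandermondeProd M v := by
  have hterm : ∀ r ∈ range M, vandermondeProd M (Function.update v r (v r - 1)) =
      vandermondeProd M v * ∏ j ∈ (range M).erase r, (v r - v j - 1) / (v r - v j) := by
    intro r hr
    have hne : ∏ j ∈ (range M).erase r, (v r - v j) ≠ 0 :=
      prod_ne_zero_iff.mpr fun j hj => sub_ne_zero.mpr fun h =>
        ne_of_mem_erase hj (hv (mem_coe.mpr (mem_of_mem_erase hj)) (mem_coe.mpr hr) h.symm)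
    have := vandermondeProd_update_mul_prod_erase (mem_range.mp hr) v (v r - 1) (v r)
    rw [Function.update_eq_self] at this
    rw [prod_div_distrib, ← mul_div_assoc, eq_div_iff hne, this]
    exact congrArg _ (prod_congr rfl fun _ _ => by ring)
  have hsum := sum_mul_prod_erase_sub_one_div hv
  rw [card_range] at hsum
  rw [sum_congr rfl fun r hr => by rw [hterm r hr], ← hsum, sum_mul]
  exact sum_congr rfl fun _ _ => by ring

end LagrangeIdentity

section Corners

variable {μ : YoungDiagram} {x : ℕ × ℕ}

def IsCorner (μ : YoungDiagram) (x : ℕ × ℕ) : Prop :=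
  x ∈ μ ∧ (x.1 + 1, x.2) ∉ μ ∧ (x.1, x.2 + 1) ∉ μ

theorem IsCorner.eq_of_le (hx : IsCorner μ x) {y : ℕ × ℕ} (hy : y ∈ μ) (hxy : x ≤ y) :
    y = x := by
  obtain ⟨-, hdown, hright⟩ := hx
  rcases Nat.lt_or_eq_of_le hxy.1 with h1 | h1
  · exact absurd (μ.up_left_mem h1 hxy.2 hy) hdown
  rcases Nat.lt_or_eq_of_le hxy.2 with h2 | h2
  · exact absurd (μ.up_left_mem h1.le h2 hy) hright
  · exact Prod.ext h1.symm h2.symm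

theorem IsCorner.rowLen_eq (hx : IsCorner μ x) : μ.rowLen x.1 = x.2 + 1 := by
  have h1 := YoungDiagram.mem_iff_lt_rowLen.mp hx.1
  have h2 := mt YoungDiagram.mem_iff_lt_rowLen.mpr hx.2.2
  omega

theorem isCorner_rowEnd_iff {r : ℕ} :
    IsCorner μ (r, μ.rowLen r - 1) ↔ μ.rowLen (r + 1) < μ.rowLen r := by
  simp only [IsCorner, YoungDiagram.mem_iff_lt_rowLen]
  omega

theorem fst_lt_colLen_zero {y : ℕ × ℕ} (hy : y ∈ μ) : y.1 < μ.colLen 0 :=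
  YoungDiagram.mem_iff_lt_colLen.mp (μ.up_left_mem le_rfl (Nat.zero_le _) hy)

def eraseCorner (μ : YoungDiagram) (x : ℕ × ℕ) (hx : IsCorner μ x) : YoungDiagram where
  cells := μ.cells.erase x
  isLowerSet a b hba ha := by
    simp only [coe_erase, Set.mem_sdiff, mem_coe, YoungDiagram.mem_cells,
      Set.mem_singleton_iff] at ha ⊢
    exact ⟨μ.isLowerSet hba ha.1, fun hb => ha.2 (hx.eq_of_le ha.1 (hb ▸ hba))⟩

theorem mem_eraseCorner (hx : IsCorner μ x) {y : ℕ × ℕ} :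
    y ∈ eraseCorner μ x hx ↔ y ∈ μ ∧ y ≠ x := by
  rw [← YoungDiagram.mem_cells, eraseCorner, YoungDiagram.mem_mk, mem_erase,
    YoungDiagram.mem_cells, and_comm]

theorem card_eraseCorner (hx : IsCorner μ x) : (eraseCorner μ x hx).card = μ.card - 1 :=
  card_erase_of_mem ((YoungDiagram.mem_cells _).mpr hx.1)

theorem rowLen_eq_of_forall_mem_iff {ν : YoungDiagram} {i t : ℕ}
    (h : ∀ j, (i, j) ∈ ν ↔ j < t) : ν.rowLen i = t := by
  have h1 := YoungDiagram.mem_iff_lt_rowLen.symm.trans (h t)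
  have h2 := YoungDiagram.mem_iff_lt_rowLen.symm.trans (h (ν.rowLen i))
  omega

theorem rowLen_eraseCorner (hx : IsCorner μ x) :
    (eraseCorner μ x hx).rowLen = Function.update μ.rowLen x.1 x.2 := by
  funext i
  refine rowLen_eq_of_forall_mem_iff fun j => ?_
  rw [mem_eraseCorner, YoungDiagram.mem_iff_lt_rowLen]
  rcases eq_or_ne i x.1 with rfl | hi
  · rw [Function.update_self, hx.rowLen_eq, Ne, Prod.ext_iff]
    omega
  · rw [Function.update_of_ne hi]
    exact and_iff_left fun h => hi (congrArg Prod.fst h)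

end Corners

section Tableaux

variable {μ : YoungDiagram} {x : ℕ × ℕ} {T : ℕ × ℕ → ℕ}

theorem IsSYT.mem_Icc (hT : IsSYT μ T) {y : ℕ × ℕ} (hy : y ∈ μ) : T y ∈ Set.Icc 1 μ.card :=
  hT.1.mapsTo (mem_coe.mpr ((YoungDiagram.mem_cells _).mpr hy))

instance finite_isSYT (μ : YoungDiagram) : Finite {T : ℕ × ℕ → ℕ // IsSYT μ T} := by
  refine Finite.of_injective
    (fun T (y : μ.cells) => (⟨T.1 y, T.2.mem_Icc ((YoungDiagram.mem_cells _).mp y.2)⟩ :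
      Set.Icc 1 μ.card)) fun T T' h => Subtype.ext (funext fun y => ?_)
  by_cases hy : y ∈ μ.cells
  · exact congrArg Subtype.val (congrFun h ⟨y, hy⟩)
  · rw [T.2.2.1 y hy, T'.2.2.1 y hy]

instance finite_isSYT_and (μ : YoungDiagram) (P : (ℕ × ℕ → ℕ) → Prop) :
    Finite {T : ℕ × ℕ → ℕ // IsSYT μ T ∧ P T} :=
  Finite.of_injective (fun T => (⟨T.1, T.2.1⟩ : {T // IsSYT μ T}))
    fun _ _ h => Subtype.ext (Subtype.mk.inj h)

theorem fS_eq_one_of_card_eq_zero (h : μ.card = 0) : fS μ = 1 := by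
  have hcells : ∀ y, y ∉ μ.cells := by simp [Finset.card_eq_zero.mp h]
  refine Nat.card_eq_one_iff_exists.mpr
    ⟨⟨0, ?_⟩, fun T => Subtype.ext (funext fun y => T.2.2.1 y (hcells y))⟩
  refine ⟨?_, fun _ _ => rfl, fun i j hij => absurd hij (hcells _),
    fun i j hij => absurd hij (hcells _)⟩
  simp [Set.eq_empty_of_forall_notMem hcells, h]

theorem fS_eq_sum_fc (hn : 0 < μ.card) : fS μ = ∑ y ∈ μ.cells, fc μ y μ.card := by
  let forget : (Σ y : μ.cells, {T : ℕ × ℕ → ℕ // IsSYT μ T ∧ T y = μ.card}) →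
      {T : ℕ × ℕ → ℕ // IsSYT μ T} := fun p => ⟨p.2.1, p.2.2.1⟩
  have hforget : Function.Bijective forget := by
    refine ⟨fun p q h => ?_, fun T => ?_⟩
    · have hT : p.2.1 = q.2.1 := congrArg Subtype.val h
      refine Sigma.subtype_ext (Subtype.ext ?_) hT
      refine p.2.2.1.1.injOn (mem_coe.mpr p.1.2) (mem_coe.mpr q.1.2) ?_
      rw [p.2.2.2, hT, q.2.2.2]
    · obtain ⟨y, hy, hTy⟩ := T.2.1.surjOn (Set.right_mem_Icc.mpr hn)
      exact ⟨⟨⟨y, hy⟩, T.1, T.2, hTy⟩, rfl⟩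
  rw [fS, ← Nat.card_eq_of_bijective forget hforget, Nat.card_sigma]
  exact sum_coe_sort μ.cells fun y => fc μ y μ.card

theorem isCorner_of_fc_ne_zero (hn : 0 < μ.card) (h : fc μ x μ.card ≠ 0) : IsCorner μ x := by
  obtain ⟨⟨T, hT, hTx⟩⟩ := (Nat.card_ne_zero.mp h).1
  have hx : x ∈ μ := by
    by_contra hx
    rw [hT.2.1 x (mt (YoungDiagram.mem_cells _).mp hx)] at hTx
    omega
  obtain ⟨i, j⟩ := x
  refine ⟨hx, fun hdown => ?_, fun hright => ?_⟩
  · dsimp only at hdown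
    have := hT.2.2.2 i j hdown
    have := (hT.mem_Icc hdown).2
    omega
  · dsimp only at hright
    have := hT.2.2.1 i j hright
    have := (hT.mem_Icc hright).2
    omega

theorem coe_cells_eraseCorner (hx : IsCorner μ x) :
    ((eraseCorner μ x hx).cells : Set (ℕ × ℕ)) = ↑μ.cells \ {x} :=
  coe_erase x μ.cells

theorem ne_of_le_of_mem_eraseCorner (hx : IsCorner μ x) {a b : ℕ × ℕ} (hab : a ≤ b)
    (hb : b ∈ eraseCorner μ x hx) : a ≠ x := by
  rintro rfl
  obtain ⟨hbμ, hbx⟩ := (mem_eraseCorner hx).mp hb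
  exact hbx (hx.eq_of_le hbμ hab)

theorem isSYT_eraseCorner_update_zero (hx : IsCorner μ x) (hT : IsSYT μ T) (hTx : T x = μ.card) :
    IsSYT (eraseCorner μ x hx) (Function.update T x 0) := by
  obtain ⟨hbij, hzero, hrow, hcol⟩ := hT
  have hupd : ∀ {a b}, a ≤ b → b ∈ eraseCorner μ x hx →
      Function.update T x 0 a = T a ∧ Function.update T x 0 b = T b := fun hab hb =>
    ⟨Function.update_of_ne (ne_of_le_of_mem_eraseCorner hx hab hb) _ _,
      Function.update_of_ne ((mem_eraseCorner hx).mp hb).2 _ _⟩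
  refine ⟨?_, fun y hy => ?_, fun i j h => ?_, fun i j h => ?_⟩
  · have hIcc : Set.Icc 1 μ.card \ {T x} = Set.Icc 1 (eraseCorner μ x hx).card := by
      ext k
      simp only [Set.mem_sdiff, Set.mem_Icc, Set.mem_singleton_iff, card_eraseCorner, hTx]
      omega
    rw [coe_cells_eraseCorner, ← hIcc]
    exact (hbij.sdiff_singleton (mem_coe.mpr ((YoungDiagram.mem_cells _).mpr hx.1))).congr
      fun y hy => (Function.update_of_ne hy.2 _ _).symm
  · rcases eq_or_ne y x with rfl | hyx
    · exact Function.update_self _ _ _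
    · rw [Function.update_of_ne hyx]
      exact hzero y fun hyμ => hy ((YoungDiagram.mem_cells _).mpr
        ((mem_eraseCorner hx).mpr ⟨(YoungDiagram.mem_cells _).mp hyμ, hyx⟩))
  · obtain ⟨ha, hb⟩ := hupd (Prod.mk_le_mk.mpr ⟨le_rfl, j.le_succ⟩) h
    rw [ha, hb]
    exact hrow i j ((mem_eraseCorner hx).mp h).1
  · obtain ⟨ha, hb⟩ := hupd (Prod.mk_le_mk.mpr ⟨i.le_succ, le_rfl⟩) h
    rw [ha, hb]
    exact hcol i j ((mem_eraseCorner hx).mp h).1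

theorem isSYT_update_card (hx : IsCorner μ x) (hT : IsSYT (eraseCorner μ x hx) T) :
    IsSYT μ (Function.update T x μ.card) := by
  obtain ⟨hbij, hzero, hrow, hcol⟩ := hT
  have hxμ : x ∈ μ.cells := (YoungDiagram.mem_cells _).mpr hx.1
  have hlt : ∀ {a b}, a ≤ b → a ≠ b → b ∈ μ → (b ∈ eraseCorner μ x hx → T a < T b) →
      Function.update T x μ.card a < Function.update T x μ.card b := by
    intro a b hab hne hb hlt
    by_cases hbx : b = x
    · have ha : a ∈ eraseCorner μ x hx :=
        (mem_eraseCorner hx).mpr ⟨μ.isLowerSet hab hb, hbx ▸ hne⟩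
      have := hbij.mapsTo ((YoungDiagram.mem_cells _).mpr ha)
      rw [hbx, Function.update_self, Function.update_of_ne (hbx ▸ hne)]
      simp only [Set.mem_Icc, card_eraseCorner] at this
      omega
    · have hb' : b ∈ eraseCorner μ x hx := (mem_eraseCorner hx).mpr ⟨hb, hbx⟩
      rw [Function.update_of_ne hbx,
        Function.update_of_ne (ne_of_le_of_mem_eraseCorner hx hab hb')]
      exact hlt hb'
  refine ⟨?_, fun y hy => ?_, fun i j h => ?_, fun i j h => ?_⟩
  · have hIcc : insert μ.card (Set.Icc 1 (eraseCorner μ x hx).card) = Set.Icc 1 μ.card := by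
      have : 0 < μ.card := card_pos.mpr ⟨x, hxμ⟩
      ext k
      simp only [card_eraseCorner, Set.mem_insert_iff, Set.mem_Icc]
      omega
    rw [coe_cells_eraseCorner] at hbij
    have hnot : Function.update T x μ.card x ∉ Set.Icc 1 (eraseCorner μ x hx).card := by
      simp [card_eraseCorner]
    rw [← Set.insert_sdiff_self_of_mem (mem_coe.mpr hxμ), ← hIcc]
    simpa only [Function.update_self] using
      (hbij.congr fun y hy => (Function.update_of_ne hy.2 _ _).symm).insert hnot
  · have hyx : y ≠ x := fun h => hy (h ▸ hxμ)
    rw [Function.update_of_ne hyx]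
    exact hzero y fun h => hy ((YoungDiagram.mem_cells _).mpr
      ((mem_eraseCorner hx).mp ((YoungDiagram.mem_cells _).mp h)).1)
  · exact hlt (Prod.mk_le_mk.mpr ⟨le_rfl, j.le_succ⟩) (by simp) h (hrow i j)
  · exact hlt (Prod.mk_le_mk.mpr ⟨i.le_succ, le_rfl⟩) (by simp) h (hcol i j)

theorem fc_eq_fS_eraseCorner (hx : IsCorner μ x) :
    fc μ x μ.card = fS (eraseCorner μ x hx) := by
  refine Nat.card_congr
    { toFun := fun T => ⟨Function.update T.1 x 0, isSYT_eraseCorner_update_zero hx T.2.1 T.2.2⟩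
      invFun := fun T => ⟨Function.update T.1 x μ.card, isSYT_update_card hx T.2,
        Function.update_self _ _ _⟩
      left_inv := fun T => Subtype.ext ?_
      right_inv := fun T => Subtype.ext ?_ }
  · dsimp only
    rw [Function.update_idem, Function.update_eq_self_iff]
    exact T.2.2.symm
  · have hTx : T.1 x = 0 := T.2.2.1 x fun h => ((mem_eraseCorner hx).mp
      ((YoungDiagram.mem_cells _).mp h)).2 rfl
    dsimp only
    rw [Function.update_idem, Function.update_eq_self_iff]
    exact hTx.symm

theorem fS_eq_sum_fc_rowEnd {M : ℕ} (hn : 0 < μ.card) (hM : μ.colLen 0 ≤ M) :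
    fS μ = ∑ r ∈ range M, fc μ (r, μ.rowLen r - 1) μ.card := by
  rw [fS_eq_sum_fc hn]
  symm
  refine sum_bij_ne_zero (fun r _ _ => (r, μ.rowLen r - 1))
    (fun r _ h => (YoungDiagram.mem_cells _).mpr (isCorner_of_fc_ne_zero hn h).1)
    (fun _ _ _ _ _ _ h => congrArg Prod.fst h) (fun y _ h => ?_) (fun _ _ _ => rfl)
  have hy := isCorner_of_fc_ne_zero hn h
  have hy2 : μ.rowLen y.1 - 1 = y.2 := by rw [hy.rowLen_eq, Nat.add_sub_cancel]
  exact ⟨y.1, mem_range.mpr ((fst_lt_colLen_zero hy.1).trans_le hM), by rwa [hy2], by rw [hy2]⟩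

end Tableaux

section Beta

variable {μ : YoungDiagram} {M : ℕ}

/-- The β-numbers of `μ` as a partition with `M` (possibly zero) parts; for `M = μ.colLen 0`
they are the hook lengths of the first column. -/
def beta (μ : YoungDiagram) (M i : ℕ) : ℕ := μ.rowLen i + (M - 1 - i)

theorem beta_lt_beta {i k : ℕ} (hik : i < k) (hk : k < M) : beta μ M k < beta μ M i := by
  have := μ.rowLen_anti i k hik.le
  unfold beta
  omega

@[to_additive]
theorem prod_cells_eq_prod_range_rowLen {α : Type*} [CommMonoid α] (hM : μ.colLen 0 ≤ M)
    (f : ℕ × ℕ → α) :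
    ∏ y ∈ μ.cells, f y = ∏ i ∈ range M, ∏ j ∈ range (μ.rowLen i), f (i, j) := by
  rw [← prod_fiberwise_of_maps_to (g := Prod.fst) (t := range M) fun y hy =>
    mem_range.mpr ((fst_lt_colLen_zero ((YoungDiagram.mem_cells _).mp hy)).trans_le hM)]
  refine prod_congr rfl fun i _ => ?_
  rw [show μ.cells.filter (fun y => y.1 = i) = μ.row i from rfl, YoungDiagram.row_eq_prod,
    singleton_product, prod_map]
  rfl

theorem card_eq_sum_rowLen (hM : μ.colLen 0 ≤ M) : μ.card = ∑ i ∈ range M, μ.rowLen i := by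
  rw [YoungDiagram.card, card_eq_sum_ones, sum_cells_eq_sum_range_rowLen hM]
  simp

theorem sum_beta (hM : μ.colLen 0 ≤ M) :
    ∑ i ∈ range M, beta μ M i = μ.card + M.choose 2 := by
  rw [card_eq_sum_rowLen hM, Nat.choose_two_right, ← sum_range_id,
    ← sum_range_reflect (fun i => i) M, ← sum_add_distrib]
  rfl

theorem hook_add_add_add_one {i j : ℕ} (h : (i, j) ∈ μ) :
    hook μ (i, j) + i + j + 1 = μ.rowLen i + μ.colLen j := by
  have h1 := YoungDiagram.mem_iff_lt_rowLen.mp h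
  have h2 := YoungDiagram.mem_iff_lt_colLen.mp h
  unfold hook
  dsimp only
  omega

theorem hook_lt_hook {i j j' : ℕ} (hjj' : j < j') (h : (i, j') ∈ μ) :
    hook μ (i, j') < hook μ (i, j) := by
  have := hook_add_add_add_one h
  have := hook_add_add_add_one (μ.up_left_mem le_rfl hjj'.le h)
  have := μ.colLen_anti j j' hjj'.le
  omega

theorem hook_mem_Icc (hM : μ.colLen 0 ≤ M) {i j : ℕ} (h : (i, j) ∈ μ) :
    hook μ (i, j) ∈ Icc 1 (beta μ M i) := by
  have := hook_add_add_add_one h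
  have := YoungDiagram.mem_iff_lt_rowLen.mp h
  have := YoungDiagram.mem_iff_lt_colLen.mp h
  have := μ.colLen_anti 0 j (Nat.zero_le _)
  rw [mem_Icc, beta]
  omega

/-- The hook of `(i, j)` is longer than `βᵢ - βₖ` if `(k, j) ∈ μ` and shorter otherwise. -/
theorem hook_ne_beta_sub_beta {i j k : ℕ} (h : (i, j) ∈ μ) (hik : i < k) (hk : k < M) :
    hook μ (i, j) ≠ beta μ M i - beta μ M k := by
  have := hook_add_add_add_one h
  have := μ.rowLen_anti i k hik.le
  have hrow := (YoungDiagram.mem_iff_lt_rowLen (μ := μ) (i := k) (j := j)).symm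
  have hcol := (YoungDiagram.mem_iff_lt_colLen (μ := μ) (i := k) (j := j)).symm
  unfold beta
  by_cases hkj : (k, j) ∈ μ <;> simp only [hkj, iff_true, iff_false, not_lt] at hrow hcol <;>
    omega

/-- The hooks of row `i` and the differences `βᵢ - βₖ`, `i < k < M`, together fill
`{1, …, βᵢ}`. -/
theorem prod_hook_row_mul_prod_beta_sub (hM : μ.colLen 0 ≤ M) {i : ℕ} (hi : i < M) :
    (∏ j ∈ range (μ.rowLen i), hook μ (i, j)) * ∏ k ∈ Ico (i + 1) M, (beta μ M i - beta μ M k) =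
      (beta μ M i).factorial := by
  have hmem : ∀ j ∈ range (μ.rowLen i), (i, j) ∈ μ := fun j hj =>
    YoungDiagram.mem_iff_lt_rowLen.mpr (mem_range.mp hj)
  have hA : Set.InjOn (fun j => hook μ (i, j)) (range (μ.rowLen i)) :=
    StrictAntiOn.injOn fun j _ j' hj' hjj' => hook_lt_hook hjj' (hmem j' hj')
  have hB : Set.InjOn (fun k => beta μ M i - beta μ M k) (Ico (i + 1) M) :=
    StrictMonoOn.injOn fun k hk k' hk' hkk' => by
      simp only [coe_Ico, Set.mem_Ico] at hk hk'
      have := beta_lt_beta (μ := μ) hkk' hk'.2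
      have := beta_lt_beta (μ := μ) (Nat.lt_of_succ_le hk.1) hk.2
      omega
  have hdisj : Disjoint ((range (μ.rowLen i)).image fun j => hook μ (i, j))
      ((Ico (i + 1) M).image fun k => beta μ M i - beta μ M k) := by
    simp only [disjoint_left, mem_image, mem_Ico, not_exists, not_and]
    rintro _ ⟨j, hj, rfl⟩ k hk
    exact (hook_ne_beta_sub_beta (hmem j hj) hk.1 hk.2).symm
  have hsub : ((range (μ.rowLen i)).image fun j => hook μ (i, j)) ∪
      ((Ico (i + 1) M).image fun k => beta μ M i - beta μ M k) ⊆ Icc 1 (beta μ M i) := by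
    simp only [union_subset_iff, image_subset_iff, mem_Icc, mem_Ico]
    refine ⟨fun j hj => mem_Icc.mp (hook_mem_Icc hM (hmem j hj)), fun k hk => ?_⟩
    have := beta_lt_beta (μ := μ) (Nat.lt_of_succ_le hk.1) hk.2
    omega
  have hunion := eq_of_subset_of_card_le hsub <| by
    rw [card_union_of_disjoint hdisj, card_image_of_injOn hA, card_image_of_injOn hB,
      card_range, Nat.card_Ico, Nat.card_Icc, beta]
    omega
  rw [← prod_Ico_id_eq_factorial, Finset.Ico_add_one_right_eq_Icc, ← hunion,
    prod_union hdisj, prod_image hA, prod_image hB]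

theorem prod_hook_mul_vandermondeProd_beta (hM : μ.colLen 0 ≤ M) :
    (∏ y ∈ μ.cells, (hook μ y : ℚ)) * vandermondeProd M (fun i => (beta μ M i : ℚ)) =
      ∏ i ∈ range M, ((beta μ M i).factorial : ℚ) := by
  rw [prod_cells_eq_prod_range_rowLen hM, vandermondeProd_eq_prod_Ico, ← prod_mul_distrib]
  refine prod_congr rfl fun i hi => ?_
  rw [← prod_hook_row_mul_prod_beta_sub hM (mem_range.mp hi), Nat.cast_mul, Nat.cast_prod,
    Nat.cast_prod]
  congr 1
  refine prod_congr rfl fun k hk => ?_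
  rw [mem_Ico] at hk
  rw [Nat.cast_sub (beta_lt_beta (Nat.lt_of_succ_le hk.1) hk.2).le]

theorem vandermondeProd_beta_pos : 0 < vandermondeProd M (fun i => (beta μ M i : ℚ)) :=
  vandermondeProd_pos fun _ _ hik hk => by exact_mod_cast beta_lt_beta hik hk

end Beta

section HookLengthFormula

variable {μ : YoungDiagram} {M : ℕ}

theorem colLen_eraseCorner_le {x : ℕ × ℕ} (hx : IsCorner μ x) (j : ℕ) :
    (eraseCorner μ x hx).colLen j ≤ μ.colLen j := by
  by_contra h
  have := ((mem_eraseCorner hx).mp (YoungDiagram.mem_iff_lt_colLen.mpr (not_le.mp h))).1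
  exact lt_irrefl _ (YoungDiagram.mem_iff_lt_colLen.mp this)

theorem beta_eraseCorner {x : ℕ × ℕ} (hx : IsCorner μ x) :
    beta (eraseCorner μ x hx) M = Function.update (beta μ M) x.1 (beta μ M x.1 - 1) := by
  funext i
  rcases eq_or_ne i x.1 with rfl | hi
  · simp only [beta, rowLen_eraseCorner, Function.update_self, hx.rowLen_eq]
    omega
  · simp only [beta, rowLen_eraseCorner, Function.update_of_ne hi]

theorem prod_factorial_beta_eraseCorner {x : ℕ × ℕ} (hx : IsCorner μ x) (hxM : x.1 < M) :
    ∏ i ∈ range M, (beta μ M i).factorial =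
      beta μ M x.1 * ∏ i ∈ range M, (beta (eraseCorner μ x hx) M i).factorial := by
  have hpos : beta μ M x.1 ≠ 0 := by
    rw [beta, hx.rowLen_eq]
    omega
  rw [beta_eraseCorner, ← mul_prod_erase _ _ (mem_range.mpr hxM),
    ← mul_prod_erase _ _ (mem_range.mpr hxM), Function.update_self, ← mul_assoc,
    Nat.mul_factorial_pred hpos]
  exact congrArg _ (prod_congr rfl fun i hi => by rw [Function.update_of_ne (ne_of_mem_erase hi)])

/-- Off the corner rows, either `βᵣ - 1 = βᵣ₊₁` or `r` is an empty last row. -/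
theorem beta_mul_vandermondeProd_update_eq_zero (hM : μ.colLen 0 ≤ M) {r : ℕ} (hr : r < M)
    (h : ¬ μ.rowLen (r + 1) < μ.rowLen r) :
    (beta μ M r : ℚ) *
      vandermondeProd M (Function.update (fun i => (beta μ M i : ℚ)) r (beta μ M r - 1)) = 0 := by
  have hrow : μ.rowLen (r + 1) = μ.rowLen r :=
    le_antisymm (μ.rowLen_anti r _ r.le_succ) (not_lt.mp h)
  rcases Nat.lt_or_ge (r + 1) M with hr1 | hr1
  · refine mul_eq_zero_of_right _ (vandermondeProd_eq_zero r.lt_succ_self hr1 ?_)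
    have : beta μ M r = beta μ M (r + 1) + 1 := by
      unfold beta
      omega
    rw [Function.update_self, Function.update_of_ne r.succ_ne_self, this]
    push_cast
    ring
  · have hempty : μ.rowLen r = 0 := by
      by_contra hne
      have := fst_lt_colLen_zero (YoungDiagram.mem_iff_lt_rowLen.mpr
        (by omega : 0 < μ.rowLen (r + 1)))
      omega
    refine mul_eq_zero_of_left ?_ _
    rw [beta, hempty]
    norm_cast
    omega

theorem fc_rowEnd_mul_prod_factorial_beta (hn : 0 < μ.card) (hM : μ.colLen 0 ≤ M) {r : ℕ}
    (hr : r < M)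
    (ih : ∀ ν : YoungDiagram, ν.card = μ.card - 1 → ν.colLen 0 ≤ M →
      (fS ν : ℚ) * ∏ i ∈ range M, ((beta ν M i).factorial : ℚ) =
        ((μ.card - 1).factorial : ℚ) * vandermondeProd M (fun i => (beta ν M i : ℚ))) :
    (fc μ (r, μ.rowLen r - 1) μ.card : ℚ) * ∏ i ∈ range M, ((beta μ M i).factorial : ℚ) =
      ((μ.card - 1).factorial : ℚ) * ((beta μ M r : ℚ) *
        vandermondeProd M (Function.update (fun i => (beta μ M i : ℚ)) r (beta μ M r - 1))) := by
  by_cases hc : μ.rowLen (r + 1) < μ.rowLen r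
  · have hx := isCorner_rowEnd_iff.mpr hc
    have hβ : (fun i => (beta (eraseCorner μ _ hx) M i : ℚ)) =
        Function.update (fun i => (beta μ M i : ℚ)) r (beta μ M r - 1) := by
      have : 1 ≤ beta μ M r := by
        unfold beta
        omega
      rw [beta_eraseCorner hx]
      funext i
      rcases eq_or_ne i r with rfl | hi
      · rw [Function.update_self, Function.update_self, Nat.cast_sub this, Nat.cast_one]
      · rw [Function.update_of_ne hi, Function.update_of_ne hi]
    rw [fc_eq_fS_eraseCorner hx, ← Nat.cast_prod, prod_factorial_beta_eraseCorner hx hr,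
      Nat.cast_mul, Nat.cast_prod, ← hβ]
    linear_combination (beta μ M r : ℚ) *
      ih _ (card_eraseCorner hx) ((colLen_eraseCorner_le hx 0).trans hM)
  · have hfc : fc μ (r, μ.rowLen r - 1) μ.card = 0 := by
      by_contra hne
      exact hc (isCorner_rowEnd_iff.mp (isCorner_of_fc_ne_zero hn hne))
    rw [hfc, beta_mul_vandermondeProd_update_eq_zero hM hr hc, Nat.cast_zero, zero_mul, mul_zero]

theorem fS_mul_prod_factorial_beta (μ : YoungDiagram) (hM : μ.colLen 0 ≤ M) :
    (fS μ : ℚ) * ∏ i ∈ range M, ((beta μ M i).factorial : ℚ) =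
      (μ.card.factorial : ℚ) * vandermondeProd M (fun i => (beta μ M i : ℚ)) := by
  induction hn : μ.card using Nat.strong_induction_on generalizing μ with
  | _ n ih =>
  rcases Nat.eq_zero_or_pos n with rfl | hpos
  · rw [fS_eq_one_of_card_eq_zero hn, ← prod_hook_mul_vandermondeProd_beta hM, card_eq_zero.mp hn]
    simp
  have hinj : Set.InjOn (fun i => (beta μ M i : ℚ)) (range M) :=
    StrictAntiOn.injOn fun i _ k hk hik => by exact_mod_cast beta_lt_beta hik (mem_range.mp hk)
  have hsum : ∑ i ∈ range M, (beta μ M i : ℚ) = n + M.choose 2 := by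
    exact_mod_cast hn ▸ sum_beta hM
  calc (fS μ : ℚ) * ∏ i ∈ range M, ((beta μ M i).factorial : ℚ)
      = ∑ r ∈ range M, (fc μ (r, μ.rowLen r - 1) μ.card : ℚ) *
          ∏ i ∈ range M, ((beta μ M i).factorial : ℚ) := by
        rw [fS_eq_sum_fc_rowEnd (hn ▸ hpos) hM, Nat.cast_sum, sum_mul]
    _ = ((n - 1).factorial : ℚ) * ∑ r ∈ range M, (beta μ M r : ℚ) *
          vandermondeProd M (Function.update (fun i => (beta μ M i : ℚ)) r (beta μ M r - 1)) := by
        rw [mul_sum, ← hn]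
        exact sum_congr rfl fun r hr => fc_rowEnd_mul_prod_factorial_beta (hn ▸ hpos) hM
          (mem_range.mp hr) fun ν hν hνM => ih _ (by omega) ν hνM hν
    _ = (n.factorial : ℚ) * vandermondeProd M (fun i => (beta μ M i : ℚ)) := by
        rw [sum_mul_vandermondeProd_update M hinj, hsum, add_sub_cancel_right, ← mul_assoc,
          ← Nat.cast_mul, Nat.mul_comm (n - 1).factorial n, Nat.mul_factorial_pred hpos.ne']

theorem factorial_card_eq_prod_hook_mul_fS (μ : YoungDiagram) :
    (μ.card.factorial : ℚ) = (∏ y ∈ μ.cells, (hook μ y : ℚ)) * fS μ := by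
  refine mul_right_cancel₀ (vandermondeProd_beta_pos (μ := μ) (M := μ.colLen 0)).ne' ?_
  rw [← fS_mul_prod_factorial_beta μ le_rfl, ← prod_hook_mul_vandermondeProd_beta le_rfl]
  ring

end HookLengthFormula

/-- The case k = n of the drop function formula: d(n,x) = (Π h(y))·f(n,x), and summing
over all cells recovers n! = (Π h(y))·f_μ. -/
theorem stmt8 (μ : YoungDiagram) (hn : 1 ≤ μ.card) (d : ℕ × ℕ → ℕ → ℚ)
    (hd : ∀ x ∈ μ.cells, ∀ k, 1 ≤ k → k ≤ μ.card →
      d x k = (∏ y ∈ μ.cells, (hook μ y : ℚ)) / ((μ.card : ℚ) - k + 1) *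
        ∑ l ∈ Finset.Icc k μ.card, (fc μ x l : ℚ)) :
    (∀ x ∈ μ.cells, d x μ.card = (∏ y ∈ μ.cells, (hook μ y : ℚ)) * (fc μ x μ.card : ℚ)) ∧
    (Nat.factorial μ.card : ℚ) = (∏ y ∈ μ.cells, (hook μ y : ℚ)) * (fS μ : ℚ) := by
  refine ⟨fun x hx => ?_, factorial_card_eq_prod_hook_mul_fS μ⟩
  rw [hd x hx μ.card hn le_rfl, Icc_self, sum_singleton, sub_self, zero_add, div_one]

end NPS
end

section
/- Every forward slide σ = (k_0, k_1, ..., k_{r+s}) on a tabloid T has a unique decomposition σ = σ_2 ∘ σ_1 where σ_1 = (k_0,...,k_r) is a forward slide on T of length r and σ_2 = (k_0, k_{r+1}, ..., k_{r+s}) is a forward slide on σ_1 ∘ T of length s. -/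
/-!
For distinct `a, b₁, …, b_r, c₁, …, c_s` the cycle `(a b₁ … b_r c₁ … c_s)` equals
`(a c₁ … c_s) ∘ (a b₁ … b_r)`: conjugating by the transposition `(a b₁)` reduces this to the
same identity with one `b` fewer. The first factor is a forward slide along the first `r + 1`
cells of the path; it sends `k_r` to `k₀` and fixes `k_{r+1}, …`, so along the rest of the path,
starting at the cell of `k_r`, the entries of `σ₁ ∘ T` read `k₀, k_{r+1}, …, k_{r+s}`.

For uniqueness, every `k_i` with `i ≥ 1` is moved by `σ`, hence occurs in one of the two factors;
as the factors have only `r + s` further entries in total, their concatenation is a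
rearrangement of `k₁, …, k_{r+s}`. The cycle it defines is `σ`, and a cycle written from a fixed
starting point `k₀` determines its list of entries.
-/

open Finset

namespace NPS

/-- A tabloid of shape `μ`: a bijection from the cells of `μ` onto `{1, …, n}`,
zero outside `μ`. -/
def IsTabloid (μ : YoungDiagram) (T : ℕ × ℕ → ℕ) : Prop :=
  Set.BijOn T ↑μ.cells (Set.Icc 1 μ.card) ∧ ∀ x ∉ μ.cells, T x = 0

/-- `b` is a right or bottom neighbour of `a`. -/
def NextCell (a b : ℕ × ℕ) : Prop := b = (a.1, a.2 + 1) ∨ b = (a.1 + 1, a.2)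

/-- `ks = [k_0, …, k_r]` is (the entry list of) a forward slide on `T` at `x`:
the entries lie along a path of cells of `μ` starting at `x` and moving right or down,
`k_1 < k_2 < … < k_r`, and `k_0 > k_r` (if `r ≥ 1`).  The associated permutation is
the cycle `(k_0, …, k_r)`, i.e. `ks.formPerm`. -/
def IsForwardSlide (μ : YoungDiagram) (T : ℕ × ℕ → ℕ) (x : ℕ × ℕ) (ks : List ℕ) : Prop :=
  ∃ c : List (ℕ × ℕ),
    c.head? = some x ∧ (∀ y ∈ c, y ∈ μ.cells) ∧
    List.Chain' NextCell c ∧ ks = c.map T ∧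
    List.Chain' (· < ·) ks.tail ∧
    (1 < ks.length → ∀ m ∈ ks.getLast?, m < T x)

end NPS

namespace List

section Preorder

variable {α : Type*} [Preorder α]

theorem Pairwise.forall_lt_iff_getLast_lt {l : List α} {b : α} (h : l.Pairwise (· < ·))
    (hl : l ≠ []) : (∀ z ∈ l, z < b) ↔ l.getLast hl < b :=
  ⟨fun hb => hb _ (getLast_mem hl), fun hb _ hz =>
    ((h.imp le_of_lt).rel_getLast hz).trans_lt hb⟩

theorem forall_getLast?_lt_iff_forall_tail_lt {l : List α} {b : α}
    (h : l.tail.Pairwise (· < ·)) :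
    (1 < l.length → ∀ m ∈ l.getLast?, m < b) ↔ ∀ z ∈ l.tail, z < b := by
  rcases l with _ | ⟨k, _ | ⟨k', t⟩⟩
  · simp
  · simp
  · rw [tail_cons] at h ⊢
    rw [h.forall_lt_iff_getLast_lt (cons_ne_nil _ _), getLast?_cons_cons,
      getLast?_eq_some_getLast (cons_ne_nil _ _)]
    simp

end Preorder

variable {α : Type*} [DecidableEq α]

theorem formPerm_map_perm (f : Equiv.Perm α) :
    ∀ l : List α, (l.map f).formPerm = f * l.formPerm * f⁻¹
  | [] => by simp
  | [x] => by simp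
  | x :: y :: l => by
    rw [map_cons, map_cons, formPerm_cons_cons, ← map_cons, formPerm_map_perm f (y :: l),
      formPerm_cons_cons, Equiv.swap_apply_apply]
    group

theorem formPerm_cons_append {a : α} :
    ∀ {l₁ l₂ : List α}, (a :: (l₁ ++ l₂)).Nodup →
      (a :: (l₁ ++ l₂)).formPerm = (a :: l₂).formPerm * (a :: l₁).formPerm
  | [], l₂, _ => by simp
  | b :: l₁, l₂, h => by
    have ha : a ∉ l₂ := fun ha => (nodup_cons.mp h).1 (by simp [ha])
    have hb : b ∉ l₂ := fun hb => (nodup_cons.mp (nodup_cons.mp h).2).1 (by simp [hb])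
    have hconj : (a :: l₂).formPerm * Equiv.swap a b = Equiv.swap a b * (b :: l₂).formPerm := by
      have hmap : (b :: l₂).map (Equiv.swap a b) = a :: l₂ := by
        rw [map_cons, Equiv.swap_apply_right, map_congr_left fun z hz =>
          Equiv.swap_apply_of_ne_of_ne (ne_of_mem_of_not_mem hz ha) (ne_of_mem_of_not_mem hz hb),
          map_id']
      rw [← hmap, formPerm_map_perm, Equiv.swap_inv, mul_assoc, Equiv.swap_mul_self, mul_one]
    rw [cons_append, formPerm_cons_cons, formPerm_cons_append (nodup_cons.mp h).2,
      formPerm_cons_cons, ← mul_assoc, ← hconj, mul_assoc]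

theorem eq_of_formPerm_cons_eq {a : α} {l l' : List α} (hl : (a :: l).Nodup)
    (hl' : (a :: l').Nodup) (hlen : l.length = l'.length)
    (h : (a :: l).formPerm = (a :: l').formPerm) : l = l' := by
  suffices a :: l = a :: l' from cons.inj this |>.2
  refine ext_getElem (by simp [hlen]) fun i hi hi' => ?_
  have := formPerm_pow_apply_head a l hl i
  rw [h, formPerm_pow_apply_head a l' hl'] at this
  simpa only [Nat.mod_eq_of_lt hi, Nat.mod_eq_of_lt hi'] using this.symm


theorem append_eq_of_formPerm_cons_eq_mul {a : α} {l l₁ l₂ : List α} (hl : (a :: l).Nodup)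
    (h₁ : (a :: l₁).Nodup) (h₂ : (a :: l₂).Nodup) (hlen : l₁.length + l₂.length = l.length)
    (h : (a :: l).formPerm = (a :: l₂).formPerm * (a :: l₁).formPerm) : l₁ ++ l₂ = l := by
  have hsub : l ⊆ l₁ ++ l₂ := by
    intro z hz
    have hmoved : (a :: l).formPerm z ≠ z := by
      rw [formPerm_apply_mem_ne_self_iff _ hl z (mem_cons_of_mem a hz)]
      exact Nat.succ_le_succ (length_pos_of_mem hz)
    by_contra hz'
    have hza : z ≠ a := ne_of_mem_of_not_mem hz (nodup_cons.mp hl).1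
    rw [mem_append, not_or] at hz'
    have hfix₁ : (a :: l₁).formPerm z = z := formPerm_apply_of_notMem (by simp [hza, hz'.1])
    have hfix₂ : (a :: l₂).formPerm z = z := formPerm_apply_of_notMem (by simp [hza, hz'.2])
    rw [h, Equiv.Perm.mul_apply, hfix₁, hfix₂] at hmoved
    exact hmoved rfl
  have hperm : l ~ l₁ ++ l₂ :=
    (nodup_cons.mp hl).2.subperm hsub |>.perm_of_length_le (by simp [hlen])
  have hnd : (a :: (l₁ ++ l₂)).Nodup := by
    refine nodup_cons.mpr ⟨?_, hperm.nodup_iff.mp (nodup_cons.mp hl).2⟩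
    simpa using ⟨(nodup_cons.mp h₁).1, (nodup_cons.mp h₂).1⟩
  exact eq_of_formPerm_cons_eq hnd hl (by simp [hlen]) (by rw [formPerm_cons_append hnd, h])

theorem formPerm_cons_take_apply_getElem (a : α) (l : List α) {n : ℕ}
    (hn : n < (a :: l).length) : ((a :: l).take (n + 1)).formPerm (a :: l)[n] = a := by
  rw [take_succ_cons]
  have hlast : (a :: l.take n).getLast (cons_ne_nil _ _) = (a :: l)[n] := by
    rcases n with _ | n
    · simp
    · simp [getLast_eq_getElem, Nat.min_eq_left (Nat.le_of_lt_succ hn)]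
  rw [← hlast, formPerm_apply_getLast]

theorem Nodup.formPerm_take_apply_of_mem_drop {l : List α} (hl : l.Nodup) (n : ℕ) {z : α}
    (hz : z ∈ l.drop n) : (l.take n).formPerm z = z :=
  formPerm_apply_of_notMem fun hz' => disjoint_take_drop hl le_rfl hz' hz

end List

namespace NPS

theorem isForwardSlide_iff {μ : YoungDiagram} {T : ℕ × ℕ → ℕ} {x : ℕ × ℕ} {ks : List ℕ} :
    IsForwardSlide μ T x ks ↔ ∃ path : List (ℕ × ℕ), path.head? = some x ∧
      (∀ y ∈ path, y ∈ μ.cells) ∧ path.IsChain NextCell ∧ ks = path.map T ∧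
      ks.tail.Pairwise (· < ·) ∧ ∀ z ∈ ks.tail, z < T x := by
  refine exists_congr fun _ => and_congr_right' <| and_congr_right' <| and_congr_right' <|
    and_congr_right' ?_
  rw [← List.isChain_iff_pairwise]
  exact and_congr_right fun h =>
    List.forall_getLast?_lt_iff_forall_tail_lt (List.isChain_iff_pairwise.mp h)

namespace IsForwardSlide

variable {μ : YoungDiagram} {T : ℕ × ℕ → ℕ} {x : ℕ × ℕ} {ks : List ℕ}

theorem exists_eq_cons (h : IsForwardSlide μ T x ks) :
    ∃ l, ks = T x :: l ∧ l.Pairwise (· < ·) ∧ ∀ z ∈ l, z < T x := by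
  obtain ⟨path, hx, -, -, rfl, hsort, hlt⟩ := isForwardSlide_iff.mp h
  obtain ⟨path', rfl⟩ := List.head?_eq_some_iff.mp hx
  exact ⟨path'.map T, rfl, hsort, hlt⟩

theorem nodup (h : IsForwardSlide μ T x ks) : ks.Nodup := by
  obtain ⟨l, rfl, hsort, hlt⟩ := h.exists_eq_cons
  exact List.nodup_cons.mpr ⟨fun hx => lt_irrefl _ (hlt _ hx), hsort.nodup⟩

theorem take (h : IsForwardSlide μ T x ks) (n : ℕ) :
    IsForwardSlide μ T x (ks.take (n + 1)) := by
  obtain ⟨path, hx, hmem, hchain, rfl, hsort, hlt⟩ := isForwardSlide_iff.mp h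
  have htail : ((path.map T).take (n + 1)).tail = (path.map T).tail.take n := by
    rw [List.tail_take_eq_take_tail, Nat.add_sub_cancel]
  refine isForwardSlide_iff.mpr ⟨path.take (n + 1),
    by rwa [List.head?_take, if_neg n.succ_ne_zero], fun y hy => hmem y (List.take_subset _ _ hy),
    hchain.take _, (List.map_take ..).symm, ?_, ?_⟩
  · rw [htail]
    exact hsort.sublist (List.take_sublist _ _)
  · rw [htail]
    exact fun z hz => hlt z (List.take_subset _ _ hz)

theorem exists_comp_cons_drop (h : IsForwardSlide μ T x ks) {n : ℕ} (hn : n < ks.length)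
    (σ : Equiv.Perm ℕ) (hσ : σ ks[n] = T x) (hfix : ∀ z ∈ ks.drop (n + 1), σ z = z) :
    ∃ y, IsForwardSlide μ (σ ∘ T) y (T x :: ks.drop (n + 1)) := by
  obtain ⟨path, hx, hmem, hchain, rfl, hsort, hlt⟩ := isForwardSlide_iff.mp h
  have hn' : n < path.length := by simpa using hn
  have hσT : σ (T path[n]) = T x := by simpa using hσ
  refine ⟨path[n], isForwardSlide_iff.mpr ⟨path.drop n, ?_,
    fun y hy => hmem y (List.drop_subset _ _ hy), hchain.drop _, ?_, ?_, ?_⟩⟩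
  · rw [List.head?_drop, List.getElem?_eq_getElem hn']
  · rw [List.drop_eq_getElem_cons hn', List.map_cons, Function.comp_apply, hσT, ← List.map_map,
      List.map_drop, List.map_congr_left hfix, List.map_id']
  · rw [List.tail_cons, ← List.drop_tail]
    exact hsort.sublist (List.drop_sublist _ _)
  · rw [List.tail_cons, Function.comp_apply, hσT, ← List.drop_tail]
    exact fun z hz => hlt z (List.drop_subset _ _ hz)

end IsForwardSlide

theorem stmt11_general (μ : YoungDiagram) (T : ℕ × ℕ → ℕ)
    (x : ℕ × ℕ) (ks : List ℕ) (r s : ℕ) (hlen : ks.length = r + s + 1)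
    (hks : IsForwardSlide μ T x ks) :
    ∃! p : List ℕ × List ℕ,
      p.1.length = r + 1 ∧ p.2.length = s + 1 ∧
      p.2.head? = some (T x) ∧
      IsForwardSlide μ T x p.1 ∧
      (∃ y : ℕ × ℕ, IsForwardSlide μ (⇑p.1.formPerm ∘ T) y p.2) ∧
      ks.formPerm = p.2.formPerm * p.1.formPerm := by
  obtain ⟨l, rfl, -, -⟩ := hks.exists_eq_cons
  simp only [List.length_cons, add_left_inj] at hlen
  have hnd := hks.nodup
  have hr : r < (T x :: l).length := by rw [List.length_cons]; omega
  refine ⟨((T x :: l).take (r + 1), T x :: (T x :: l).drop (r + 1)),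
    ⟨by simp only [List.length_take, List.length_cons]; omega,
      by simp only [List.length_drop, List.length_cons]; omega, rfl, hks.take r,
      hks.exists_comp_cons_drop hr _ (List.formPerm_cons_take_apply_getElem _ _ hr)
        fun _ => hnd.formPerm_take_apply_of_mem_drop _, ?_⟩, ?_⟩
  · have hsplit := List.formPerm_cons_append (a := T x) (l₁ := l.take r) (l₂ := l.drop r)
      (by rwa [List.take_append_drop])
    simpa only [List.take_append_drop, List.take_succ_cons, List.drop_succ_cons] using hsplit
  · rintro ⟨p₁, p₂⟩ ⟨hlen₁, hlen₂, hhead, hslide₁, ⟨y, hslide₂⟩, hmul⟩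
    obtain ⟨A, rfl, -, -⟩ := hslide₁.exists_eq_cons
    obtain ⟨B, rfl⟩ := List.head?_eq_some_iff.mp hhead
    simp only [List.length_cons, add_left_inj] at hlen₁ hlen₂
    obtain rfl : A ++ B = l := List.append_eq_of_formPerm_cons_eq_mul hnd hslide₁.nodup
      hslide₂.nodup (by omega) hmul
    simp [List.take_left' hlen₁, List.drop_left' hlen₁]

/-- Unique decomposition of a forward slide of length r + s into a forward slide of
length r on T followed by a forward slide of length s (starting with the same entry
k₀ = T x) on σ₁ ∘ T. -/
theorem stmt11 (μ : YoungDiagram) (T : ℕ × ℕ → ℕ) (hT : IsTabloid μ T)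
    (x : ℕ × ℕ) (ks : List ℕ) (r s : ℕ) (hlen : ks.length = r + s + 1)
    (hks : IsForwardSlide μ T x ks) :
    ∃! p : List ℕ × List ℕ,
      p.1.length = r + 1 ∧ p.2.length = s + 1 ∧
      p.2.head? = some (T x) ∧
      IsForwardSlide μ T x p.1 ∧
      (∃ y : ℕ × ℕ, IsForwardSlide μ (⇑p.1.formPerm ∘ T) y p.2) ∧
      ks.formPerm = p.2.formPerm * p.1.formPerm :=
  stmt11_general μ T x ks r s hlen hks

end NPS
end

section
/- Every forward slide (k_0, ..., k_r) on a tabloid T decomposes as a product of r exchanges: (k_0,...,k_r) = (k_r,k_0)···(k_2,k_0)(k_1,k_0), where each transposition (k_i,k_0) is an exchange (a transposition of entries in neighbouring cells) on the tabloid (k_{i−1},k_0)···(k_1,k_0) ∘ T. -/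
/-! Write the slide as `k₀ :: t`. For distinct entries the cycle `(k₀, t₁, …, tⱼ)` equals
`(tⱼ, k₀) * (k₀, t₁, …, tⱼ₋₁)`, so the partial products of the exchanges are the cycles of the
prefixes of the slide. The `i`-th of them sends `kᵢ`, the last entry of its prefix, to `k₀` and
fixes `kᵢ₊₁`, which lies outside the prefix; since the cells of `kᵢ` and `kᵢ₊₁` are adjacent on
the slide path, `(kᵢ₊₁, k₀)` is an exchange. Distinctness holds because `k₁ < ⋯ < kᵣ < k₀`. -/

open Finset

namespace NPS

/-- The transposition (k, l) is an exchange on T: k and l occupy adjacent cells of μ. -/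
def IsExchange (μ : YoungDiagram) (T : ℕ × ℕ → ℕ) (k l : ℕ) : Prop :=
  ∃ a b : ℕ × ℕ, a ∈ μ.cells ∧ b ∈ μ.cells ∧ (NextCell a b ∨ NextCell b a) ∧
    T a = k ∧ T b = l

end NPS

namespace List

variable {α : Type*}

theorem Nodup.getElem_notMem_take {l : List α} (h : l.Nodup) {i : ℕ} (hi : i < l.length) :
    l[i] ∉ l.take i := by
  intro hmem
  obtain ⟨j, hj, e⟩ := mem_take_iff_getElem.1 hmem
  have := h.getElem_inj_iff.1 e
  omega

theorem nodup_cons_of_isChain_lt [Preorder α] {a : α} {t : List α}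
    (ht : t.IsChain (· < ·)) (hlast : ∀ m ∈ t.getLast?, m < a) : (a :: t).Nodup := by
  have : (t ++ [a]).IsChain (· < ·) :=
    isChain_append.2 ⟨ht, isChain_singleton a, by simpa using hlast⟩
  exact (isRotated_concat a t).nodup_iff.1 this.pairwise.nodup

variable [DecidableEq α]

theorem formPerm_cons_append_singleton {a b : α} {t : List α} (h : (a :: t ++ [b]).Nodup) :
    formPerm (a :: t ++ [b]) = Equiv.swap b a * formPerm (a :: t) := by
  rw [formPerm_eq_of_isRotated h (isRotated_concat b (a :: t)), formPerm_cons_cons]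

theorem formPerm_cons_eq_prod_swap {a : α} {t : List α} (h : (a :: t).Nodup) :
    formPerm (a :: t) = ((t.map fun k => Equiv.swap k a).reverse).prod := by
  induction t using reverseRecOn with
  | nil => rfl
  | append_singleton s b ih =>
    rw [← cons_append] at h ⊢
    rw [formPerm_cons_append_singleton h, ih (h.sublist (sublist_append_left _ _))]
    simp

end List

namespace NPS

theorem IsForwardSlide.nodup_s12 {μ : YoungDiagram} {T : ℕ × ℕ → ℕ} {x : ℕ × ℕ} {ks : List ℕ}
    (hks : IsForwardSlide μ T x ks) : ks.Nodup := by
  obtain ⟨c, hhead, -, -, rfl, hincr, hlast⟩ := hks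
  obtain ⟨cs, rfl⟩ := List.head?_eq_some_iff.1 hhead
  simp only [List.map_cons, List.tail_cons] at hincr hlast ⊢
  refine List.nodup_cons_of_isChain_lt hincr fun m hm => ?_
  generalize cs.map T = t at hm hlast
  cases t with
  | nil => simp at hm
  | cons b t => exact hlast (by simp) m (by simpa [List.getLast?_cons_cons] using hm)

theorem isExchange_formPerm_cons_take {μ : YoungDiagram} {T : ℕ × ℕ → ℕ} {y : ℕ × ℕ}
    {cs : List (ℕ × ℕ)} (hcells : ∀ z ∈ y :: cs, z ∈ μ.cells)
    (hpath : (y :: cs).IsChain NextCell) (hnodup : (T y :: cs.map T).Nodup)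
    {i : ℕ} (hi : i < cs.length) :
    IsExchange μ (List.formPerm (T y :: (cs.map T).take i) ∘ T) (T cs[i]) (T y) := by
  have hi' : i < (y :: cs).length := Nat.lt_succ_of_lt hi
  have hnext : NextCell (y :: cs)[i] cs[i] := List.isChain_iff_getElem.1 hpath i (by simpa)
  refine ⟨cs[i], (y :: cs)[i], hcells _ (by simp), hcells _ (List.getElem_mem _),
    Or.inr hnext, ?_, ?_⟩
  · rw [Function.comp_apply, List.formPerm_apply_of_notMem]
    have := hnodup.getElem_notMem_take (i := i + 1) (by simpa)
    rwa [List.getElem_cons_succ, List.getElem_map, List.take_succ_cons] at this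
  · have hprefix_last :
        T (y :: cs)[i] = (T y :: (cs.map T).take i)[((cs.map T).take i).length]'(by simp) := by
      cases i <;> simp [Nat.min_eq_left hi.le]
    rw [Function.comp_apply, hprefix_last, List.formPerm_apply_getElem_length]

theorem stmt12_general (μ : YoungDiagram) (T : ℕ × ℕ → ℕ)
    (x : ℕ × ℕ) (ks : List ℕ) (hks : IsForwardSlide μ T x ks) :
    ks.formPerm = ((ks.tail.map fun k => Equiv.swap k (T x)).reverse).prod ∧
    ∀ i : ℕ, ∀ h : i < ks.tail.length,
      IsExchange μ
        (⇑(((ks.tail.take i).map fun k => Equiv.swap k (T x)).reverse.prod) ∘ T)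
        (ks.tail.get ⟨i, h⟩) (T x) := by
  have hnodup := hks.nodup_s12
  obtain ⟨c, hhead, hcells, hpath, rfl, -, -⟩ := hks
  obtain ⟨cs, rfl⟩ := List.head?_eq_some_iff.1 hhead
  simp only [List.map_cons, List.tail_cons]
  refine ⟨List.formPerm_cons_eq_prod_swap hnodup, fun i hi => ?_⟩
  rw [← List.formPerm_cons_eq_prod_swap]
  · simpa using isExchange_formPerm_cons_take hcells hpath hnodup (i := i) (by simpa using hi)
  · exact hnodup.sublist ((List.take_sublist i _).cons_cons _)

/-- A forward slide (k_0, ..., k_r) decomposes as the product of the r exchanges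
(k_r,k_0)...(k_2,k_0)(k_1,k_0), each (k_i,k_0) being an exchange on
(k_{i-1},k_0)...(k_1,k_0) composed with T. -/
theorem stmt12 (μ : YoungDiagram) (T : ℕ × ℕ → ℕ) (hT : IsTabloid μ T)
    (x : ℕ × ℕ) (ks : List ℕ) (hks : IsForwardSlide μ T x ks) :
    ks.formPerm = ((ks.tail.map fun k => Equiv.swap k (T x)).reverse).prod ∧
    ∀ i : ℕ, ∀ h : i < ks.tail.length,
      IsExchange μ
        (⇑(((ks.tail.take i).map fun k => Equiv.swap k (T x)).reverse.prod) ∘ T)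
        (ks.tail.get ⟨i, h⟩) (T x) :=
  stmt12_general μ T x ks hks

end NPS
end

section
/- Let f : S → S' be a bijection of a finite set S = A ∪ B (disjoint) onto S' = A' ∪ B' (disjoint), and let g : B' → B be a bijection. For a ∈ A, the sequence a, f(a), g(f(a)), f(g(f(a))), ... (applying g whenever the current element lies in B' and f whenever it lies in A ∪ B) eventually reaches an element of A', and the resulting map A → A' is a bijection. -/
open Finset

/-- Garsia–Milne-style involution principle: given a bijection f from A ∪ B onto
A' ∪ B' (A, B disjoint and A', B' disjoint finite sets) and a bijection g : B' → B,
iterating x ↦ f x and (on B') x ↦ f (g x) starting from any a ∈ A stays in B' until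
it eventually reaches A', and the resulting map is a bijection from A onto A'. -/
theorem stmt17 {α : Type*} (A B A' B' : Finset α)
    (hAB : Disjoint A B) (hA'B' : Disjoint A' B')
    (f g : α → α)
    (hf : Set.BijOn f (↑A ∪ ↑B : Set α) (↑A' ∪ ↑B' : Set α))
    (hg : Set.BijOn g ↑B' ↑B) :
    ∃ F : α → α, Set.BijOn F ↑A ↑A' ∧
      ∀ a ∈ A, ∃ m : ℕ, F a = (f ∘ g)^[m] (f a) ∧ (f ∘ g)^[m] (f a) ∈ A' ∧
        ∀ i < m, (f ∘ g)^[i] (f a) ∈ B' := by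
  classical
  set u : α → ℕ → α := fun a m => (f ∘ g)^[m] (f a) with hu
  have husucc : ∀ a m, u a (m + 1) = f (g (u a m)) := by
    intro a m
    simp [hu, Function.iterate_succ_apply']
  -- iterates stay in A' ∪ B'
  have hmem : ∀ a ∈ A, ∀ m, (∀ i < m, u a i ∈ B') → u a m ∈ (↑A' ∪ ↑B' : Set α) := by
    intro a ha m hm
    cases m with
    | zero => exact hf.mapsTo (Or.inl (by simpa using ha))
    | succ k =>
      have hk : u a k ∈ B' := hm k (Nat.lt_succ_self k)
      rw [husucc]
      exact hf.mapsTo (Or.inr (by exact_mod_cast hg.mapsTo (by exact_mod_cast hk)))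
  -- injectivity of f ∘ g on B'
  have hfg_inj : ∀ x ∈ B', ∀ y ∈ B', f (g x) = f (g y) → x = y := by
    intro x hx y hy h
    have hgx : g x ∈ B := hg.mapsTo (by exact_mod_cast hx)
    have hgy : g y ∈ B := hg.mapsTo (by exact_mod_cast hy)
    have := hf.injOn (Or.inr (by exact_mod_cast hgx)) (Or.inr (by exact_mod_cast hgy)) h
    exact hg.injOn (by exact_mod_cast hx) (by exact_mod_cast hy) this
  -- cancellation
  have key : ∀ i j a b, a ∈ A → b ∈ A → i ≤ j → (∀ k < i, u a k ∈ B') →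
      (∀ k < j, u b k ∈ B') → u a i = u b j → f a = u b (j - i) := by
    intro i
    induction i with
    | zero =>
      intro j a b _ _ _ _ _ h
      simpa [hu] using h
    | succ n ih =>
      intro j a b ha hb hij hka hkb h
      obtain ⟨j', rfl⟩ : ∃ j', j = j' + 1 := ⟨j - 1, by omega⟩
      rw [husucc, husucc] at h
      have h' : u a n = u b j' :=
        hfg_inj _ (hka n (Nat.lt_succ_self n)) _ (hkb j' (Nat.lt_succ_self j')) h
      have := ih j' a b ha hb (by omega) (fun k hk => hka k (by omega))
        (fun k hk => hkb k (by omega)) h'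
      simpa [Nat.succ_sub_succ] using this
  -- f a is never a later iterate (when earlier iterates are in B')
  have hnoteq : ∀ a ∈ A, ∀ b ∈ A, ∀ k, 0 < k → (∀ i < k, u b i ∈ B') → f a ≠ u b k := by
    intro a ha b hb k hk hkb h
    obtain ⟨k', rfl⟩ : ∃ k', k = k' + 1 := ⟨k - 1, by omega⟩
    rw [husucc] at h
    have hbk : u b k' ∈ B' := hkb k' (Nat.lt_succ_self k')
    have hgb : g (u b k') ∈ B := hg.mapsTo (by exact_mod_cast hbk)
    have : a = g (u b k') :=
      hf.injOn (Or.inl (by exact_mod_cast ha)) (Or.inr (by exact_mod_cast hgb)) h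
    exact (Finset.disjoint_left.mp hAB ha) (this ▸ hgb)
  -- existence of an exit time
  have hexists : ∀ a ∈ A, ∃ m, u a m ∈ A' := by
    intro a ha
    by_contra hcon
    push_neg at hcon
    have hallB' : ∀ m, u a m ∈ B' := by
      intro m
      induction m using Nat.strong_induction_on with
      | _ m ih =>
        have := hmem a ha m (fun i hi => ih i hi)
        rcases this with h | h
        · exact absurd (by exact_mod_cast h) (hcon m)
        · exact_mod_cast h
    -- pigeonhole
    obtain ⟨i, hi, j, hj, hij, heq⟩ :=
      Finset.exists_ne_map_eq_of_card_lt_of_maps_to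
        (s := Finset.range (B'.card + 1)) (t := B')
        (by simp) (fun i _ => hallB' i)
    rcases Nat.lt_or_ge i j with hlt | hge
    · have := key i j a a ha ha (le_of_lt hlt) (fun k _ => hallB' k) (fun k _ => hallB' k) heq
      exact hnoteq a ha a ha (j - i) (by omega) (fun k _ => hallB' k) this
    · have hlt : j < i := lt_of_le_of_ne hge (fun h => hij h.symm)
      have := key j i a a ha ha (le_of_lt hlt) (fun k _ => hallB' k) (fun k _ => hallB' k) heq.symm
      exact hnoteq a ha a ha (i - j) (by omega) (fun k _ => hallB' k) this
  -- define F
  set F : α → α := fun a => if h : a ∈ A then u a (Nat.find (hexists a h)) else a with hF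
  have hFdef : ∀ a (h : a ∈ A), F a = u a (Nat.find (hexists a h)) := by
    intro a h; simp [hF, h]
  have hmA' : ∀ a (h : a ∈ A), u a (Nat.find (hexists a h)) ∈ A' := fun a h => Nat.find_spec (hexists a h)
  have hmB' : ∀ a (h : a ∈ A), ∀ i < Nat.find (hexists a h), u a i ∈ B' := by
    intro a h i hi
    induction i using Nat.strong_induction_on with
    | _ i ih =>
      have hnot : u a i ∉ A' := Nat.find_min (hexists a h) hi
      rcases hmem a h i (fun k hk => ih k hk (by omega)) with hmem' | hmem'
      · exact absurd (by exact_mod_cast hmem') hnot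
      · exact_mod_cast hmem'
  have hmaps : Set.MapsTo F ↑A ↑A' := by
    intro a ha
    have ha' : a ∈ A := by exact_mod_cast ha
    rw [hFdef a ha']
    exact_mod_cast hmA' a ha'
  have hinj : Set.InjOn F ↑A := by
    intro a ha b hb h
    have ha' : a ∈ A := by exact_mod_cast ha
    have hb' : b ∈ A := by exact_mod_cast hb
    rw [hFdef a ha', hFdef b hb'] at h
    set m₁ := Nat.find (hexists a ha') with hm₁
    set m₂ := Nat.find (hexists b hb') with hm₂
    have hfab : f a = f b := by
      rcases le_or_gt m₁ m₂ with hle | hlt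
      · have := key m₁ m₂ a b ha' hb' hle (hmB' a ha') (hmB' b hb') h
        rcases Nat.eq_or_lt_of_le hle with heq | hlt'
        · simpa [heq, hu] using this
        · exact absurd this (hnoteq a ha' b hb' (m₂ - m₁) (by omega)
            (fun k hk => hmB' b hb' k (by omega)))
      · have := key m₂ m₁ b a hb' ha' (le_of_lt hlt) (hmB' b hb') (hmB' a ha') h.symm
        exact absurd this (hnoteq b hb' a ha' (m₁ - m₂) (by omega)
          (fun k hk => hmB' a ha' k (by omega)))
    exact hf.injOn (Or.inl ha) (Or.inl hb) hfab
  -- cardinalities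
  have hcard : A.card = A'.card := by
    have h1 : ((↑A ∪ ↑B : Set α)).ncard = ((↑A' ∪ ↑B' : Set α)).ncard := by
      rw [← hf.image_eq]
      exact (Set.ncard_image_of_injOn hf.injOn).symm
    have h2 : (↑B' : Set α).ncard = (↑B : Set α).ncard := by
      rw [← hg.image_eq]
      exact (Set.ncard_image_of_injOn hg.injOn).symm
    rw [← Finset.coe_union, ← Finset.coe_union] at h1
    rw [Set.ncard_coe_finset, Set.ncard_coe_finset] at h1
    rw [Set.ncard_coe_finset, Set.ncard_coe_finset] at h2
    rw [Finset.card_union_of_disjoint hAB, Finset.card_union_of_disjoint hA'B'] at h1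
    omega
  have himg : A.image F = A' := by
    apply Finset.eq_of_subset_of_card_le
    · intro x hx
      obtain ⟨a, ha, rfl⟩ := Finset.mem_image.mp hx
      exact_mod_cast hmaps (by exact_mod_cast ha)
    · rw [Finset.card_image_of_injOn hinj, hcard]
  have hsurj : Set.SurjOn F ↑A ↑A' := by
    intro x hx
    rw [← himg] at hx
    obtain ⟨a, ha, rfl⟩ := Finset.mem_image.mp (by exact_mod_cast hx)
    exact ⟨a, by exact_mod_cast ha, rfl⟩
  refine ⟨F, ⟨hmaps, hinj, hsurj⟩, ?_⟩
  intro a ha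
  exact ⟨Nat.find (hexists a ha), hFdef a ha, hmA' a ha, hmB' a ha⟩
end
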